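/- arXiv:1812.04937 — 8 statements merged into one kernel-verified Lean document; each statement's English description precedes it below -/
import Mathlib

section
/- Let (X, 0, f) and (Y, 0, g) be pointed modules (f 0 = 0, g 0 = 0) and let h be the structure map of their smash product on X × Y. Then h is nilpotent (for every p ∈ X × Y there exists n with h^[n] p = (0,0)) if and only if f is nilpotent or g is nilpotent. -/
/-!
While an `h`-orbit avoids `(0, 0)`, `h` acts on it as `f × g`, and `h q ≠ (0, 0)` exactly when
both `f q.1` and `g q.2` are nonzero. So an `h`-orbit avoiding `(0, 0)` forever is a pair of an
`f`-orbit and a `g`-orbit that avoid `0` from the first step on, and conversely.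
-/

open Function

section Smash

variable {X Y : Type*} [Zero X] [Zero Y] [DecidableEq X] [DecidableEq Y]
  {f : X → X} {g : Y → Y} {h : X × Y → X × Y}

theorem smash_ne_zero_iff
    (hh : ∀ p : X × Y, h p = if f p.1 ≠ 0 ∧ g p.2 ≠ 0 then (f p.1, g p.2) else (0, 0))
    (p : X × Y) : h p ≠ (0, 0) ↔ f p.1 ≠ 0 ∧ g p.2 ≠ 0 := by
  rw [hh]
  split_ifs with hc
  · simp [hc.1, hc.2]
  · simpa using hc

theorem smash_apply_of_ne_zero
    (hh : ∀ p : X × Y, h p = if f p.1 ≠ 0 ∧ g p.2 ≠ 0 then (f p.1, g p.2) else (0, 0))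
    {p : X × Y} (hp : f p.1 ≠ 0 ∧ g p.2 ≠ 0) : h p = (f p.1, g p.2) := by
  rw [hh, if_pos hp]

theorem smash_iterate_of_forall_iterate_ne_zero
    (hh : ∀ p : X × Y, h p = if f p.1 ≠ 0 ∧ g p.2 ≠ 0 then (f p.1, g p.2) else (0, 0))
    {x : X} {y : Y} (hx : ∀ n, f^[n] x ≠ 0) (hy : ∀ n, g^[n] y ≠ 0) (n : ℕ) :
    h^[n] (x, y) = (f^[n] x, g^[n] y) := by
  induction n with
  | zero => rfl
  | succ n ih =>
    have hfx : f (f^[n] x) ≠ 0 := by simpa only [iterate_succ_apply'] using hx (n + 1)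
    have hgy : g (g^[n] y) ≠ 0 := by simpa only [iterate_succ_apply'] using hy (n + 1)
    rw [iterate_succ_apply', ih, smash_apply_of_ne_zero hh ⟨hfx, hgy⟩,
      iterate_succ_apply', iterate_succ_apply']

theorem smash_iterate_of_forall_smash_iterate_ne_zero
    (hh : ∀ p : X × Y, h p = if f p.1 ≠ 0 ∧ g p.2 ≠ 0 then (f p.1, g p.2) else (0, 0))
    {p : X × Y} (hp : ∀ n, h^[n] p ≠ (0, 0)) (n : ℕ) :
    h^[n] p = (f^[n] p.1, g^[n] p.2) := by
  induction n with
  | zero => rfl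
  | succ n ih =>
    have hne : h (h^[n] p) ≠ (0, 0) := by simpa only [iterate_succ_apply'] using hp (n + 1)
    rw [iterate_succ_apply', smash_apply_of_ne_zero hh ((smash_ne_zero_iff hh _).1 hne), ih,
      iterate_succ_apply', iterate_succ_apply']

theorem iterate_succ_ne_zero_of_forall_smash_iterate_ne_zero
    (hh : ∀ p : X × Y, h p = if f p.1 ≠ 0 ∧ g p.2 ≠ 0 then (f p.1, g p.2) else (0, 0))
    {p : X × Y} (hp : ∀ n, h^[n] p ≠ (0, 0)) (n : ℕ) :
    f^[n + 1] p.1 ≠ 0 ∧ g^[n + 1] p.2 ≠ 0 := by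
  have hne : h (h^[n] p) ≠ (0, 0) := by simpa only [iterate_succ_apply'] using hp (n + 1)
  rw [smash_ne_zero_iff hh, smash_iterate_of_forall_smash_iterate_ne_zero hh hp] at hne
  simpa only [iterate_succ_apply'] using hne

end Smash

theorem smash_nilpotent_iff_general {X Y : Type*} [Zero X] [Zero Y]
    [DecidableEq X] [DecidableEq Y]
    (f : X → X) (g : Y → Y)
    (h : X × Y → X × Y)
    (hh : ∀ p : X × Y,
      h p = if f p.1 ≠ 0 ∧ g p.2 ≠ 0 then (f p.1, g p.2) else (0, 0)) :
    (∀ p : X × Y, ∃ n : ℕ, h^[n] p = (0, 0)) ↔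
      ((∀ x : X, ∃ n : ℕ, f^[n] x = 0) ∨ (∀ y : Y, ∃ n : ℕ, g^[n] y = 0)) := by
  constructor
  · intro H
    by_contra! hcon
    obtain ⟨⟨x, hx⟩, ⟨y, hy⟩⟩ := hcon
    obtain ⟨n, hn⟩ := H (x, y)
    rw [smash_iterate_of_forall_iterate_ne_zero hh hx hy] at hn
    exact hx n (congrArg Prod.fst hn)
  · intro H p
    by_contra! hp
    have hne := iterate_succ_ne_zero_of_forall_smash_iterate_ne_zero hh hp
    rcases H with Hf | Hg
    · obtain ⟨n, hn⟩ := Hf (f p.1)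
      exact (hne n).1 (by rwa [iterate_succ_apply])
    · obtain ⟨n, hn⟩ := Hg (g p.2)
      exact (hne n).2 (by rwa [iterate_succ_apply])

/-- **Proposition (nilpotence of the smash product).**
Let `(X, 0, f)` and `(Y, 0, g)` be pointed modules (models of `⟨t⟩`-modules over `F₁`)
and let `h` be the structure map of their smash product on `X × Y`.  Then `h` is
nilpotent if and only if `f` is nilpotent or `g` is nilpotent. -/
theorem smash_nilpotent_iff {X Y : Type*} [Zero X] [Zero Y]
    [DecidableEq X] [DecidableEq Y]
    (f : X → X) (g : Y → Y) (hf : f 0 = 0) (hg : g 0 = 0)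
    (h : X × Y → X × Y)
    (hh : ∀ p : X × Y,
      h p = if f p.1 ≠ 0 ∧ g p.2 ≠ 0 then (f p.1, g p.2) else (0, 0)) :
    (∀ p : X × Y, ∃ n : ℕ, h^[n] p = (0, 0)) ↔
      ((∀ x : X, ∃ n : ℕ, f^[n] x = 0) ∨ (∀ y : Y, ∃ n : ℕ, g^[n] y = 0)) :=
  smash_nilpotent_iff_general f g h hh
end

section
/- Let (X, 0, f) and (Y, 0, g) be pointed modules with smash structure map h on X × Y. Let x ∈ X and y ∈ Y be nonzero elements such that f^[n] x = 0 for some n and g^[m] y = 0 for some m. Then sInf {n : ℕ | h^[n] (x, y) = (0, 0)} = min (sInf {n : ℕ | f^[n] x = 0}) (sInf {n : ℕ | g^[n] y = 0}). (Equivalently, depth (x, y) = min (depth x, depth y).) -/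
/-!
Until one coordinate of `(f^[j] x, g^[j] y)` vanishes, the smash map acts as `f × g`, so the
`h`-orbit of `(x, y)` stays away from the basepoint; at the first step where `f^[j] x = 0` or
`g^[j] y = 0`, which is the smaller of the two annihilation times, it collapses to `(0, 0)`.
-/

open Function

section Smash

variable {X Y : Type*} [Zero X] [Zero Y] [DecidableEq X] [DecidableEq Y]
  {f : X → X} {g : Y → Y} {h : X × Y → X × Y}

theorem smash_eq_zero_iff
    (hh : ∀ p : X × Y,
      h p = if f p.1 ≠ 0 ∧ g p.2 ≠ 0 then (f p.1, g p.2) else (0, 0))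
    (p : X × Y) : h p = (0, 0) ↔ f p.1 = 0 ∨ g p.2 = 0 := by
  rw [hh p]
  split_ifs with hp
  · simp only [Prod.mk.injEq]
    tauto
  · simpa only [true_iff, not_and_or, not_not] using hp

theorem smash_iterate_eq_of_forall_le
    (hh : ∀ p : X × Y,
      h p = if f p.1 ≠ 0 ∧ g p.2 ≠ 0 then (f p.1, g p.2) else (0, 0))
    {x : X} {y : Y} {k : ℕ} (hk : ∀ j ≤ k, f^[j] x ≠ 0 ∧ g^[j] y ≠ 0) :
    h^[k] (x, y) = (f^[k] x, g^[k] y) := by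
  induction k with
  | zero => rfl
  | succ k ih =>
    have hk1 := hk (k + 1) le_rfl
    simp only [iterate_succ_apply'] at hk1 ⊢
    rw [ih fun j hj => hk j (by omega), hh, if_pos hk1]

end Smash

theorem smash_depth_min_general {X Y : Type*} [Zero X] [Zero Y]
    [DecidableEq X] [DecidableEq Y]
    (f : X → X) (g : Y → Y)
    (h : X × Y → X × Y)
    (hh : ∀ p : X × Y,
      h p = if f p.1 ≠ 0 ∧ g p.2 ≠ 0 then (f p.1, g p.2) else (0, 0))
    (x : X) (y : Y) (hx : x ≠ 0) (hy : y ≠ 0)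
    (hxn : ∃ n : ℕ, f^[n] x = 0) (hyn : ∃ m : ℕ, g^[m] y = 0) :
    sInf {n : ℕ | h^[n] (x, y) = (0, 0)} =
      min (sInf {n : ℕ | f^[n] x = 0}) (sInf {n : ℕ | g^[n] y = 0}) := by
  set a := sInf {n : ℕ | f^[n] x = 0}
  set b := sInf {n : ℕ | g^[n] y = 0}
  have hxa : f^[a] x = 0 := Nat.sInf_mem hxn
  have hyb : g^[b] y = 0 := Nat.sInf_mem hyn
  have alive : ∀ j < min a b, f^[j] x ≠ 0 ∧ g^[j] y ≠ 0 := fun j hj =>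
    ⟨Nat.notMem_of_lt_sInf (lt_min_iff.1 hj).1, Nat.notMem_of_lt_sInf (lt_min_iff.1 hj).2⟩
  have ha : a ≠ 0 := fun ha => hx (by simpa [ha] using hxa)
  have hb : b ≠ 0 := fun hb => hy (by simpa [hb] using hyb)
  obtain ⟨k, hk⟩ : ∃ k, min a b = k + 1 := Nat.exists_eq_succ_of_ne_zero (by omega)
  refine IsLeast.csInf_eq ⟨?_, fun j hj => ?_⟩
  · have hdead : f^[k + 1] x = 0 ∨ g^[k + 1] y = 0 := by
      rcases min_choice a b with e | e
      · exact .inl (by rwa [← hk, e])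
      · exact .inr (by rwa [← hk, e])
    rw [Set.mem_ofPred_eq, hk, iterate_succ_apply',
      smash_iterate_eq_of_forall_le hh fun j hj => alive j (by omega), smash_eq_zero_iff hh]
    simpa only [iterate_succ_apply'] using hdead
  · by_contra! hlt
    rw [Set.mem_ofPred_eq, smash_iterate_eq_of_forall_le hh fun i hi => alive i (by omega),
      Prod.mk.injEq] at hj
    exact (alive j hlt).1 hj.1

/-- **Proposition (depth in the smash product, nilpotent case).**
Let `(X, 0, f)` and `(Y, 0, g)` be pointed modules with smash structure map `h` on
`X × Y`.  If `x ≠ 0`, `y ≠ 0`, and both are annihilated by some iterate of `f`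
(resp. `g`), then the least `n` with `h^[n] (x, y) = (0,0)` is the minimum of the
least `n` with `f^[n] x = 0` and the least `n` with `g^[n] y = 0`; equivalently
`depth (x, y) = min (depth x, depth y)`. -/
theorem smash_depth_min {X Y : Type*} [Zero X] [Zero Y]
    [DecidableEq X] [DecidableEq Y]
    (f : X → X) (g : Y → Y) (hf : f 0 = 0) (hg : g 0 = 0)
    (h : X × Y → X × Y)
    (hh : ∀ p : X × Y,
      h p = if f p.1 ≠ 0 ∧ g p.2 ≠ 0 then (f p.1, g p.2) else (0, 0))
    (x : X) (y : Y) (hx : x ≠ 0) (hy : y ≠ 0)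
    (hxn : ∃ n : ℕ, f^[n] x = 0) (hyn : ∃ m : ℕ, g^[m] y = 0) :
    sInf {n : ℕ | h^[n] (x, y) = (0, 0)} =
      min (sInf {n : ℕ | f^[n] x = 0}) (sInf {n : ℕ | g^[n] y = 0}) :=
  smash_depth_min_general f g h hh x y hx hy hxn hyn
end

section
/- Let X and Y be finite types with basepoints 0 and maps f : X → X, g : Y → Y fixing the basepoints. Assume f is nilpotent with Γ_X connected (a rooted tree), and assume g y ≠ 0 for every nonzero y with Γ_Y connected (a wheel). Let h be the smash structure map on X × Y. Then the graph of the smash product, with vertex set {(x, y) : x ≠ 0 and y ≠ 0} and the equivalence relation generated by the pairs (p, h p) for h p ≠ (0,0), has exactly card {y : Y // y ≠ 0} equivalence classes. (Γ_{M ∧ N} consists of dim N rooted trees.) -/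
/-!
Nilpotency gives every `x ≠ 0` a depth `d x`, the least `n` with `f^[n] x = 0`, and
`d (f x) = d x - 1` along every edge of `Γ_X`. Hence the root `f^[d x - 1] x` is constant along
edges, and connectivity of `Γ_X` leaves a single root `x₀`. In the smash graph the label
`(x, y) ↦ g^[d x - 1] y` is constant along edges, and it classifies the components: `(x, y)` is
joined to `(x₀, g^[d x - 1] y)` by `d x - 1` edges, which exist because `g` kills no nonzero
element, and `(x₀, y)` has label `y`.
-/

open Relation Function

section EqvGen

variable {α β : Type*} {r : α → α → Prop}

theorem Relation.EqvGen.eq_of_invariant {c : α → β} (hc : ∀ a b, r a b → c a = c b) {a b : α}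
    (h : EqvGen r a b) : c a = c b :=
  congrArg (Quot.lift c hc) (Quot.eqvGen_sound h)

def quotEqvGenEquivOfSection (c : α → β) (s : β → α) (hc : ∀ a b, r a b → c a = c b)
    (hcs : ∀ b, c (s b) = b) (hsc : ∀ a, EqvGen r a (s (c a))) : Quot (EqvGen r) ≃ β where
  toFun := Quot.lift c fun _ _ ↦ EqvGen.eq_of_invariant hc
  invFun b := Quot.mk _ (s b)
  left_inv := Quot.ind fun a ↦ (Quot.sound (hsc a)).symm
  right_inv := hcs

end EqvGen

namespace PointedModule

variable {X : Type*} [Zero X]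

noncomputable def depth (f : X → X) (x : X) : ℕ := sInf {n | f^[n] x = 0}

noncomputable def root (f : X → X) (x : X) : X := f^[depth f x - 1] x

def Adj (f : X → X) (x y : {x : X // x ≠ 0}) : Prop := f x ≠ 0 ∧ (y : X) = f x

section Depth

variable {f : X → X} {x : X}

theorem iterate_depth (hf : ∀ x, ∃ n, f^[n] x = 0) (x : X) : f^[depth f x] x = 0 :=
  Nat.sInf_mem (hf x)

theorem iterate_ne_zero_of_lt_depth {n : ℕ} (hn : n < depth f x) : f^[n] x ≠ 0 :=
  Nat.notMem_of_lt_sInf hn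

theorem depth_pos (hf : ∀ x, ∃ n, f^[n] x = 0) (hx : x ≠ 0) : 0 < depth f x :=
  Nat.pos_of_ne_zero fun h ↦ hx (by simpa [h] using iterate_depth hf x)

theorem depth_eq_one (hf : ∀ x, ∃ n, f^[n] x = 0) (hx : x ≠ 0) (hfx : f x = 0) :
    depth f x = 1 :=
  le_antisymm (Nat.sInf_le hfx) (depth_pos hf hx)

theorem depth_apply_add_one (hf : ∀ x, ∃ n, f^[n] x = 0) (hx : x ≠ 0) :
    depth f (f x) + 1 = depth f x := by
  have hle : depth f (f x) ≤ depth f x - 1 := Nat.sInf_le <| by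
    change f^[depth f x - 1] (f x) = 0
    rw [← iterate_succ_apply, Nat.succ_eq_add_one, Nat.sub_add_cancel (depth_pos hf hx)]
    exact iterate_depth hf x
  have hge : depth f x ≤ depth f (f x) + 1 := Nat.sInf_le (iterate_depth hf (f x))
  have hpos := depth_pos hf hx
  omega

theorem iterate_depth_pred_apply (hf : ∀ x, ∃ n, f^[n] x = 0) (hx : x ≠ 0) (hfx : f x ≠ 0)
    {Y : Type*} (g : Y → Y) (y : Y) : g^[depth f (f x) - 1] (g y) = g^[depth f x - 1] y := by
  have h₁ := depth_apply_add_one hf hx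
  have h₂ := depth_pos hf hfx
  rw [← iterate_succ_apply]
  congr 1
  omega

end Depth

section Root

variable {f : X → X} {x : X}

theorem root_ne_zero (hf : ∀ x, ∃ n, f^[n] x = 0) (hx : x ≠ 0) : root f x ≠ 0 :=
  iterate_ne_zero_of_lt_depth (Nat.sub_lt (depth_pos hf hx) one_pos)

theorem apply_root (hf : ∀ x, ∃ n, f^[n] x = 0) (hx : x ≠ 0) : f (root f x) = 0 := by
  rw [root, ← iterate_succ_apply' f, Nat.succ_eq_add_one, Nat.sub_add_cancel (depth_pos hf hx)]
  exact iterate_depth hf x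

theorem root_apply (hf : ∀ x, ∃ n, f^[n] x = 0) (hx : x ≠ 0) (hfx : f x ≠ 0) :
    root f (f x) = root f x :=
  iterate_depth_pred_apply hf hx hfx f x

theorem exists_forall_root_eq (hf : ∀ x, ∃ n, f^[n] x = 0)
    (hconn : Nat.card (Quot (EqvGen (Adj f))) = 1) :
    ∃ x₀ ≠ 0, ∀ x ≠ 0, root f x = x₀ := by
  obtain ⟨hsub, ⟨q⟩⟩ := Nat.card_eq_one_iff_unique.mp hconn
  obtain ⟨⟨a, ha⟩, -⟩ := q.exists_rep
  have hinv : ∀ u v : {x : X // x ≠ 0}, Adj f u v → root f u = root f v := by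
    rintro ⟨u, hu⟩ ⟨v, -⟩ ⟨hfu, rfl⟩
    exact (root_apply hf hu hfu).symm
  refine ⟨root f a, root_ne_zero hf ha, fun x hx ↦ ?_⟩
  exact congrArg (Quot.lift (fun u : {x : X // x ≠ 0} ↦ root f u)
      fun _ _ ↦ EqvGen.eq_of_invariant hinv)
    (Subsingleton.elim (Quot.mk _ ⟨x, hx⟩ : Quot (EqvGen (Adj f))) (Quot.mk _ ⟨a, ha⟩))

end Root

theorem iterate_ne_zero {Y : Type*} [Zero Y] {g : Y → Y} (hg : ∀ y, y ≠ 0 → g y ≠ 0) {y : Y}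
    (hy : y ≠ 0) (n : ℕ) : g^[n] y ≠ 0 :=
  Set.MapsTo.iterate (s := {y : Y | y ≠ 0}) hg n hy

section Smash

variable {Y : Type*} [Zero Y] [DecidableEq X] [DecidableEq Y]

def smashMap (f : X → X) (g : Y → Y) (p : X × Y) : X × Y :=
  if f p.1 ≠ 0 ∧ g p.2 ≠ 0 then (f p.1, g p.2) else (0, 0)

def SmashAdj (f : X → X) (g : Y → Y) (p q : {p : X × Y // p.1 ≠ 0 ∧ p.2 ≠ 0}) : Prop :=
  smashMap f g p ≠ (0, 0) ∧ (q : X × Y) = smashMap f g p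

variable {f : X → X} {g : Y → Y}

theorem smashAdj_iff (hg : ∀ y, y ≠ 0 → g y ≠ 0) {p q : {p : X × Y // p.1 ≠ 0 ∧ p.2 ≠ 0}} :
    SmashAdj f g p q ↔ f p.1.1 ≠ 0 ∧ (q : X × Y) = (f p.1.1, g p.1.2) := by
  by_cases hfp : f p.1.1 = 0 <;> simp [SmashAdj, smashMap, hfp, hg _ p.2.2]

theorem reflTransGen_smashAdj_of_lt_depth (hg : ∀ y, y ≠ 0 → g y ≠ 0) {n : ℕ}
    (p q : {p : X × Y // p.1 ≠ 0 ∧ p.2 ≠ 0}) (hn : n < depth f p.1.1)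
    (hq : (q : X × Y) = (f^[n] p.1.1, g^[n] p.1.2)) : ReflTransGen (SmashAdj f g) p q := by
  induction n generalizing q with
  | zero => exact (Subtype.ext hq : q = p) ▸ ReflTransGen.refl
  | succ n ih =>
    let m : {p : X × Y // p.1 ≠ 0 ∧ p.2 ≠ 0} :=
      ⟨(f^[n] p.1.1, g^[n] p.1.2),
        iterate_ne_zero_of_lt_depth (by omega), iterate_ne_zero hg p.2.2 n⟩
    refine (ih m (by omega) rfl).tail ((smashAdj_iff hg).2 ⟨?_, ?_⟩)
    · rw [← iterate_succ_apply' f]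
      exact iterate_ne_zero_of_lt_depth hn
    · rw [hq, iterate_succ_apply', iterate_succ_apply']

noncomputable def smashComponentsEquiv (hf : ∀ x, ∃ n, f^[n] x = 0)
    (hg : ∀ y, y ≠ 0 → g y ≠ 0) {x₀ : X} (hx₀ : x₀ ≠ 0) (hroot : ∀ x ≠ 0, root f x = x₀) :
    Quot (EqvGen (SmashAdj f g)) ≃ {y : Y // y ≠ 0} :=
  quotEqvGenEquivOfSection
    (fun p ↦ ⟨g^[depth f p.1.1 - 1] p.1.2, iterate_ne_zero hg p.2.2 _⟩)
    (fun y ↦ ⟨(x₀, y), hx₀, y.2⟩)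
    (fun p q hpq ↦ by
      obtain ⟨hfp, hq⟩ := (smashAdj_iff hg).1 hpq
      simp only [hq, iterate_depth_pred_apply hf p.2.1 hfp])
    (fun y ↦ by
      have hfx₀ : f x₀ = 0 := hroot x₀ hx₀ ▸ apply_root hf hx₀
      simp [depth_eq_one hf hx₀ hfx₀])
    (fun p ↦ EqvGen.reflTransGen_le_eqvGen _ _ _ <| reflTransGen_smashAdj_of_lt_depth hg _ _
      (Nat.sub_lt (depth_pos hf p.2.1) one_pos) (congrArg (·, _) (hroot _ p.2.1).symm))

end Smash

end PointedModule

theorem smash_tree_wheel_components_general {X Y : Type*}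
    [Zero X] [Zero Y] [DecidableEq X] [DecidableEq Y]
    (f : X → X) (g : Y → Y)
    (hfnil : ∀ x : X, ∃ n : ℕ, f^[n] x = 0)
    (hgwheel : ∀ y : Y, y ≠ 0 → g y ≠ 0)
    (hXconn : Nat.card (Quot (Relation.EqvGen
      (fun x y : {x : X // x ≠ 0} => f (x : X) ≠ 0 ∧ (y : X) = f (x : X)))) = 1)
    (h : X × Y → X × Y)
    (hh : ∀ p : X × Y,
      h p = if f p.1 ≠ 0 ∧ g p.2 ≠ 0 then (f p.1, g p.2) else (0, 0)) :
    Nat.card (Quot (Relation.EqvGen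
      (fun p q : {p : X × Y // p.1 ≠ 0 ∧ p.2 ≠ 0} =>
        h (p : X × Y) ≠ (0, 0) ∧ (q : X × Y) = h (p : X × Y)))) =
      Nat.card {y : Y // y ≠ 0} := by
  obtain rfl : h = PointedModule.smashMap f g := funext hh
  obtain ⟨x₀, hx₀, hroot⟩ := PointedModule.exists_forall_root_eq hfnil hXconn
  exact Nat.card_congr (PointedModule.smashComponentsEquiv hfnil hgwheel hx₀ hroot)

/-- **Proposition (components of the smash product of a rooted tree and a wheel).**
Let `(X, 0, f)` be a finite pointed module with `f` nilpotent and `Γ_X` connected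
(a rooted tree), and `(Y, 0, g)` a finite pointed module with `g y ≠ 0` for every
nonzero `y` and `Γ_Y` connected (a wheel).  Then the graph of the smash product
has exactly `card {y // y ≠ 0}` equivalence classes (connected components):
`Γ_{M ∧ N}` consists of `dim N` rooted trees. -/
theorem smash_tree_wheel_components {X Y : Type*} [Fintype X] [Fintype Y]
    [Zero X] [Zero Y] [DecidableEq X] [DecidableEq Y]
    (f : X → X) (g : Y → Y) (hf : f 0 = 0) (hg : g 0 = 0)
    (hfnil : ∀ x : X, ∃ n : ℕ, f^[n] x = 0)
    (hgwheel : ∀ y : Y, y ≠ 0 → g y ≠ 0)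
    (hXconn : Nat.card (Quot (Relation.EqvGen
      (fun x y : {x : X // x ≠ 0} => f (x : X) ≠ 0 ∧ (y : X) = f (x : X)))) = 1)
    (hYconn : Nat.card (Quot (Relation.EqvGen
      (fun x y : {y : Y // y ≠ 0} => g (x : Y) ≠ 0 ∧ (y : Y) = g (x : Y)))) = 1)
    (h : X × Y → X × Y)
    (hh : ∀ p : X × Y,
      h p = if f p.1 ≠ 0 ∧ g p.2 ≠ 0 then (f p.1, g p.2) else (0, 0)) :
    Nat.card (Quot (Relation.EqvGen
      (fun p q : {p : X × Y // p.1 ≠ 0 ∧ p.2 ≠ 0} =>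
        h (p : X × Y) ≠ (0, 0) ∧ (q : X × Y) = h (p : X × Y)))) =
      Nat.card {y : Y // y ≠ 0} :=
  smash_tree_wheel_components_general f g hfnil hgwheel hXconn h hh
end

section
/- Let X and Y be finite types and f : X → X, g : Y → Y maps such that the equivalence relation on X generated by the pairs (x, f x) has exactly one class, and likewise for (Y, g) (each graph is connected, hence a wheel). Let p be the number of periodic points of f (points x with f^[k] x = x for some k > 0) and q the number of periodic points of g. Then the equivalence relation on X × Y generated by the pairs (z, (Prod.map f g) z) has exactly gcd(p, q) equivalence classes. (The smash product of two wheels with cycle lengths p and q has gcd(p, q) connected components.) -/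
/-!
Fix a periodic point `x₀` of `f`, of minimal period `p`. Connectivity says that every forward
orbit eventually merges with that of `x₀`, so every `x` has a phase `n - m ∈ ℤ/p`, where
`f^[m] x = f^[n] x₀`; it is well defined, increases by one under `f`, and two points have the
same phase iff their orbits eventually coincide. In particular the periodic points correspond
to `ℤ/p`. On `X × Y` the difference of the two phases, read in `ℤ/gcd(p, q)`, is invariant
under `Prod.map f g`, and by the Chinese remainder theorem two pairs with the same invariant are
shifted into each other by a common number of steps; so the invariant counts the components.
-/

open Function Filter

theorem ZMod.exists_natCast_eq_of_castHom_eq {p q : ℕ} [NeZero p] [NeZero q] {u : ZMod p}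
    {v : ZMod q} (h : ZMod.castHom (Nat.gcd_dvd_left p q) (ZMod (p.gcd q)) u =
      ZMod.castHom (Nat.gcd_dvd_right p q) (ZMod (p.gcd q)) v) :
    ∃ s : ℕ, (s : ZMod p) = u ∧ (s : ZMod q) = v := by
  rw [← ZMod.natCast_zmod_val u, ← ZMod.natCast_zmod_val v, map_natCast, map_natCast,
    ZMod.natCast_eq_natCast_iff] at h
  obtain ⟨s, hsu, hsv⟩ := Nat.chineseRemainder' h
  refine ⟨s, ?_, ?_⟩
  · rw [← ZMod.natCast_zmod_val u, ZMod.natCast_eq_natCast_iff]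
    exact hsu
  · rw [← ZMod.natCast_zmod_val v, ZMod.natCast_eq_natCast_iff]
    exact hsv

theorem Nat.card_quot_eq_of_surjective {α β : Type*} {r : α → α → Prop} {Φ : α → β}
    (hΦ : Surjective Φ) (h : ∀ a b, Φ a = Φ b ↔ r a b) :
    Nat.card (Quot r) = Nat.card β := by
  obtain rfl : r = fun a b => Φ a = Φ b := funext₂ fun a b => propext (h a b).symm
  exact Nat.card_congr (Setoid.quotientKerEquivOfSurjective Φ hΦ)

namespace Function

variable {α β : Type*} {f : α → α} {g : β → β}

theorem eqvGen_iff_exists_iterate_eq {a b : α} :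
    Relation.EqvGen (fun x y => y = f x) a b ↔ ∃ m n, f^[m] a = f^[n] b := by
  constructor
  · intro h
    induction h with
    | rel x y hxy => exact ⟨1, 0, hxy.symm⟩
    | refl x => exact ⟨0, 0, rfl⟩
    | symm x y _ ih => obtain ⟨m, n, h⟩ := ih; exact ⟨n, m, h.symm⟩
    | trans x y z _ _ ih₁ ih₂ =>
      obtain ⟨m, n, h₁⟩ := ih₁
      obtain ⟨m', n', h₂⟩ := ih₂
      refine ⟨m' + m, n + n', ?_⟩
      rw [iterate_add_apply, h₁, ← iterate_add_apply, add_comm m' n, iterate_add_apply, h₂,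
        ← iterate_add_apply]
  · have reach : ∀ x k, Relation.EqvGen (fun x y => y = f x) x (f^[k] x) := by
      intro x k
      induction k with
      | zero => exact .refl x
      | succ k ih => exact ih.trans _ _ _ (.rel _ _ (iterate_succ_apply' f k x))
    rintro ⟨m, n, h⟩
    exact (reach a m).trans _ _ _ (h ▸ (reach b n).symm)

theorem exists_iterate_mem_periodicPts [Finite α] (f : α → α) (x : α) :
    ∃ n, f^[n] x ∈ periodicPts f := by
  obtain ⟨m, n, hne, h⟩ := Finite.exists_ne_map_eq_of_infinite (f^[·] x)
  wlog hlt : m < n generalizing m n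
  · exact this n m hne.symm h.symm (by omega)
  refine ⟨m, mk_mem_periodicPts (Nat.sub_pos_of_lt hlt) ?_⟩
  rw [IsPeriodicPt, IsFixedPt, ← iterate_add_apply, Nat.sub_add_cancel hlt.le]
  exact h.symm

theorem iterate_eq_iterate_iff_natCast_eq {x : α} (hx : x ∈ periodicPts f) {m n : ℕ} :
    f^[m] x = f^[n] x ↔ (m : ZMod (minimalPeriod f x)) = n := by
  have hpos := minimalPeriod_pos_of_mem_periodicPts hx
  rw [ZMod.natCast_eq_natCast_iff', ← iterate_mod_minimalPeriod_eq (n := m),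
    ← iterate_mod_minimalPeriod_eq (n := n)]
  exact iterate_eq_iterate_iff_of_lt_minimalPeriod (Nat.mod_lt _ hpos) (Nat.mod_lt _ hpos)

section CyclePhase

variable {x₀ : α} (hconn : ∀ x, ∃ m n, f^[m] x = f^[n] x₀)

noncomputable def cyclePhase (x : α) : ZMod (minimalPeriod f x₀) :=
  (hconn x).choose_spec.choose - (hconn x).choose

variable {hconn}

theorem cyclePhase_eq_of_iterate_eq (hx₀ : x₀ ∈ periodicPts f) {x : α} {m n : ℕ}
    (h : f^[m] x = f^[n] x₀) : cyclePhase hconn x = n - m := by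
  obtain ⟨m', n', h', hphase⟩ :
      ∃ m' n', f^[m'] x = f^[n'] x₀ ∧ cyclePhase hconn x = n' - m' :=
    ⟨_, _, (hconn x).choose_spec.choose_spec, rfl⟩
  have : f^[m' + n] x₀ = f^[m + n'] x₀ := by
    rw [iterate_add_apply, ← h, ← iterate_add_apply, add_comm, iterate_add_apply, h',
      ← iterate_add_apply]
  rw [iterate_eq_iterate_iff_natCast_eq hx₀] at this
  push_cast at this
  rw [hphase]
  linear_combination -this

theorem cyclePhase_iterate (hx₀ : x₀ ∈ periodicPts f) (x : α) (k : ℕ) :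
    cyclePhase hconn (f^[k] x) = cyclePhase hconn x + k := by
  obtain ⟨m, n, h⟩ := hconn x
  have hk : f^[m] (f^[k] x) = f^[k + n] x₀ := by
    rw [← iterate_add_apply, add_comm, iterate_add_apply, h, ← iterate_add_apply]
  rw [cyclePhase_eq_of_iterate_eq hx₀ hk, cyclePhase_eq_of_iterate_eq hx₀ h]
  push_cast
  ring

theorem cyclePhase_iterate_self (hx₀ : x₀ ∈ periodicPts f) (k : ℕ) :
    cyclePhase hconn (f^[k] x₀) = k := by
  simpa using cyclePhase_eq_of_iterate_eq (hconn := hconn) hx₀ (m := 0) (n := k) rfl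

theorem cyclePhase_eq_cyclePhase_iff (hx₀ : x₀ ∈ periodicPts f) {x y : α} :
    cyclePhase hconn x = cyclePhase hconn y ↔ ∀ᶠ N in atTop, f^[N] x = f^[N] y := by
  constructor
  · intro h
    obtain ⟨m, n, hx⟩ := hconn x
    obtain ⟨m', n', hy⟩ := hconn y
    rw [cyclePhase_eq_of_iterate_eq hx₀ hx, cyclePhase_eq_of_iterate_eq hx₀ hy] at h
    have hsync : f^[m + m'] x = f^[m + m'] y :=
      calc f^[m + m'] x = f^[m' + n] x₀ := by
            rw [add_comm, iterate_add_apply, hx, ← iterate_add_apply]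
        _ = f^[m + n'] x₀ :=
            (iterate_eq_iterate_iff_natCast_eq hx₀).2 (by push_cast; linear_combination h)
        _ = f^[m + m'] y := by rw [iterate_add_apply f m m' y, hy, ← iterate_add_apply]
    refine eventually_atTop.2 ⟨m + m', fun N hN => ?_⟩
    rw [← Nat.sub_add_cancel hN, iterate_add_apply, hsync, ← iterate_add_apply]
  · intro h
    obtain ⟨N, hN⟩ := h.exists
    simpa [cyclePhase_iterate hx₀] using congrArg (cyclePhase hconn) hN

end CyclePhase

theorem natCard_periodicPts_eq_minimalPeriod {x₀ : α} (hx₀ : x₀ ∈ periodicPts f)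
    (hconn : ∀ x, ∃ m n, f^[m] x = f^[n] x₀) :
    Nat.card (periodicPts f) = minimalPeriod f x₀ := by
  have : NeZero (minimalPeriod f x₀) := ⟨(minimalPeriod_pos_of_mem_periodicPts hx₀).ne'⟩
  rw [← Nat.card_zmod (minimalPeriod f x₀)]
  refine Nat.card_eq_of_bijective (fun x => cyclePhase hconn x.1) ⟨?_, fun c => ?_⟩
  · rintro ⟨x, hx⟩ ⟨y, hy⟩ hxy
    obtain ⟨N, hN⟩ := ((cyclePhase_eq_cyclePhase_iff hx₀).1 hxy).exists
    exact Subtype.ext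
      ((bijOn_periodicPts f).injOn.iterate (bijOn_periodicPts f).mapsTo N hx hy hN)
  · obtain ⟨k, rfl⟩ := ZMod.natCast_zmod_surjective c
    exact ⟨⟨f^[k] x₀, (bijOn_periodicPts f).mapsTo.iterate k hx₀⟩,
      cyclePhase_iterate_self hx₀ k⟩

theorem exists_mem_periodicPts_of_natCard_quot_eq_one [Finite α]
    (h : Nat.card (Quot (Relation.EqvGen fun x y : α => y = f x)) = 1) :
    ∃ x₀ ∈ periodicPts f, ∀ x, ∃ m n, f^[m] x = f^[n] x₀ := by
  obtain ⟨_, ⟨c⟩⟩ := Nat.card_eq_one_iff_unique.mp h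
  obtain ⟨a, -⟩ := c.exists_rep
  obtain ⟨k, hk⟩ := exists_iterate_mem_periodicPts f a
  refine ⟨f^[k] a, hk, fun x => eqvGen_iff_exists_iterate_eq.1 ?_⟩
  exact (Relation.EqvGen.is_equivalence _).eqvGen_iff.1
    (Quot.eqvGen_exact (Subsingleton.elim _ _))

section ProdCyclePhase

variable {x₀ : α} {y₀ : β} (hf : ∀ x, ∃ m n, f^[m] x = f^[n] x₀)
  (hg : ∀ y, ∃ m n, g^[m] y = g^[n] y₀)

noncomputable def prodCyclePhase (z : α × β) :
    ZMod ((minimalPeriod f x₀).gcd (minimalPeriod g y₀)) :=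
  ZMod.castHom (Nat.gcd_dvd_left _ _) _ (cyclePhase hf z.1) -
    ZMod.castHom (Nat.gcd_dvd_right _ _) _ (cyclePhase hg z.2)

variable {hf hg}

theorem prodCyclePhase_iterate (hx₀ : x₀ ∈ periodicPts f) (hy₀ : y₀ ∈ periodicPts g)
    (z : α × β) (k : ℕ) :
    prodCyclePhase hf hg ((Prod.map f g)^[k] z) = prodCyclePhase hf hg z := by
  rw [Prod.map_iterate]
  simp only [prodCyclePhase, Prod.map_fst, Prod.map_snd, cyclePhase_iterate hx₀,
    cyclePhase_iterate hy₀, map_add, map_natCast]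
  ring

theorem prodCyclePhase_surjective (hx₀ : x₀ ∈ periodicPts f)
    (hy₀ : y₀ ∈ periodicPts g) : Surjective (prodCyclePhase hf hg) := by
  have : NeZero ((minimalPeriod f x₀).gcd (minimalPeriod g y₀)) :=
    ⟨(Nat.gcd_pos_of_pos_left _ (minimalPeriod_pos_of_mem_periodicPts hx₀)).ne'⟩
  intro c
  obtain ⟨k, rfl⟩ := ZMod.natCast_zmod_surjective c
  have hy : cyclePhase hg y₀ = 0 := by simpa using cyclePhase_iterate_self (hconn := hg) hy₀ 0
  refine ⟨(f^[k] x₀, y₀), ?_⟩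
  simp only [prodCyclePhase, cyclePhase_iterate_self hx₀, hy, map_natCast, map_zero, sub_zero]

theorem prodCyclePhase_eq_iff (hx₀ : x₀ ∈ periodicPts f) (hy₀ : y₀ ∈ periodicPts g)
    {z w : α × β} :
    prodCyclePhase hf hg z = prodCyclePhase hf hg w ↔
      Relation.EqvGen (fun z w => w = Prod.map f g z) z w := by
  rw [eqvGen_iff_exists_iterate_eq]
  constructor
  · intro h
    have : NeZero (minimalPeriod f x₀) := ⟨(minimalPeriod_pos_of_mem_periodicPts hx₀).ne'⟩
    have : NeZero (minimalPeriod g y₀) := ⟨(minimalPeriod_pos_of_mem_periodicPts hy₀).ne'⟩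
    obtain ⟨s, hs₁, hs₂⟩ := ZMod.exists_natCast_eq_of_castHom_eq
      (u := cyclePhase hf w.1 - cyclePhase hf z.1) (v := cyclePhase hg w.2 - cyclePhase hg z.2)
      (by simp only [prodCyclePhase, map_sub] at h ⊢; linear_combination -h)
    have h₁ : cyclePhase hf (f^[s] z.1) = cyclePhase hf w.1 := by
      rw [cyclePhase_iterate hx₀, hs₁, add_sub_cancel]
    have h₂ : cyclePhase hg (g^[s] z.2) = cyclePhase hg w.2 := by
      rw [cyclePhase_iterate hy₀, hs₂, add_sub_cancel]
    obtain ⟨N, hN₁, hN₂⟩ := (((cyclePhase_eq_cyclePhase_iff hx₀).1 h₁).and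
      ((cyclePhase_eq_cyclePhase_iff hy₀).1 h₂)).exists
    refine ⟨N + s, N, ?_⟩
    rw [Prod.map_iterate, Prod.map_iterate]
    exact Prod.ext ((iterate_add_apply f N s z.1).trans hN₁)
      ((iterate_add_apply g N s z.2).trans hN₂)
  · rintro ⟨m, n, h⟩
    rw [← prodCyclePhase_iterate hx₀ hy₀ z m, h, prodCyclePhase_iterate hx₀ hy₀]

end ProdCyclePhase

theorem natCard_quot_eqvGen_prodMap {x₀ : α} {y₀ : β}
    (hx₀ : x₀ ∈ periodicPts f) (hf : ∀ x, ∃ m n, f^[m] x = f^[n] x₀)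
    (hy₀ : y₀ ∈ periodicPts g) (hg : ∀ y, ∃ m n, g^[m] y = g^[n] y₀) :
    Nat.card (Quot (Relation.EqvGen fun z w : α × β => w = Prod.map f g z)) =
      (minimalPeriod f x₀).gcd (minimalPeriod g y₀) := by
  rw [Nat.card_quot_eq_of_surjective (prodCyclePhase_surjective (hf := hf) (hg := hg) hx₀ hy₀)
    fun _ _ => prodCyclePhase_eq_iff hx₀ hy₀, Nat.card_zmod]

end Function

/-- **Proposition (components of the smash product of two wheels).**
Let `X`, `Y` be finite types with maps `f : X → X`, `g : Y → Y` whose graphs are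
connected (wheels), and let `p`, `q` be the numbers of periodic points of `f`
and `g` (the cycle lengths).  Then the equivalence relation on `X × Y` generated
by the pairs `(z, Prod.map f g z)` has exactly `gcd (p, q)` equivalence classes:
the smash product of two wheels with cycle lengths `p` and `q` has `gcd (p, q)`
connected components. -/
theorem smash_wheel_wheel_components {X Y : Type*} [Finite X] [Finite Y]
    (f : X → X) (g : Y → Y)
    (hXconn : Nat.card (Quot (Relation.EqvGen (fun x y : X => y = f x))) = 1)
    (hYconn : Nat.card (Quot (Relation.EqvGen (fun x y : Y => y = g x))) = 1) :
    Nat.card (Quot (Relation.EqvGen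
        (fun z w : X × Y => w = Prod.map f g z))) =
      Nat.gcd (Nat.card {x : X // ∃ k : ℕ, 0 < k ∧ f^[k] x = x})
        (Nat.card {y : Y // ∃ k : ℕ, 0 < k ∧ g^[k] y = y}) := by
  obtain ⟨x₀, hx₀, hf⟩ := exists_mem_periodicPts_of_natCard_quot_eq_one hXconn
  obtain ⟨y₀, hy₀, hg⟩ := exists_mem_periodicPts_of_natCard_quot_eq_one hYconn
  rw [natCard_quot_eqvGen_prodMap hx₀ hf hy₀ hg]
  exact congrArg₂ Nat.gcd (natCard_periodicPts_eq_minimalPeriod hx₀ hf).symm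
    (natCard_periodicPts_eq_minimalPeriod hy₀ hg).symm
end

section
/- Let X be a finite type with basepoint 0 and f : X → X with f 0 = 0, and suppose the graph Γ of (X, 0, f) is connected. Then exactly one of the following holds: either f is nilpotent (for every x there exists n with f^[n] x = 0), so Γ is a rooted tree, or f x ≠ 0 for every nonzero x, so Γ is a wheel. In particular, every indecomposable finite ⟨t⟩-module is either a rooted tree or a wheel. -/
/-!
Being eventually sent to `0` by `f` is invariant along the edges `x → f x` of `Γ`, hence constant
on the connected graph `Γ`. If some nonzero `x₀` has `f x₀ = 0`, every nonzero point therefore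
reaches `0` and `f` is nilpotent. Otherwise `f` maps nonzero points to nonzero points, so the orbit
of any vertex of `Γ` (there is one, since `Γ` has a component) avoids `0` and `f` is not nilpotent.
-/

theorem nonempty_of_card_quot_eq_one {α : Type*} {r : α → α → Prop}
    (hr : Nat.card (Quot r) = 1) : Nonempty α := by
  obtain ⟨q⟩ := (Nat.card_eq_one_iff_unique.1 hr).2
  exact ⟨(Quot.exists_rep q).choose⟩

theorem apply_eq_apply_of_card_quot_eqvGen_eq_one {α β : Type*} {r : α → α → Prop}
    (hr : Nat.card (Quot (Relation.EqvGen r)) = 1) (g : α → β)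
    (hg : ∀ a b, r a b → g a = g b) (a b : α) : g a = g b := by
  have : Subsingleton (Quot (Relation.EqvGen r)) := (Nat.card_eq_one_iff_unique.1 hr).1
  have hg' : ∀ a b, Relation.EqvGen r a b → g a = g b := fun a b h =>
    congrArg (Quot.lift g hg) (Quot.eqvGen_sound h)
  exact congrArg (Quot.lift g hg') (Subsingleton.elim (Quot.mk _ a) (Quot.mk _ b))

theorem exists_iterate_eq_iff_exists_iterate_apply_eq {X : Type*} (f : X → X) {x a : X}
    (hx : x ≠ a) : (∃ n, f^[n] x = a) ↔ ∃ n, f^[n] (f x) = a := by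
  constructor
  · rintro ⟨_ | n, hn⟩
    · exact absurd hn hx
    · exact ⟨n, hn⟩
  · rintro ⟨n, hn⟩
    exact ⟨n + 1, hn⟩

theorem indecomposable_tree_or_wheel_general {X : Type*} [Zero X]
    (f : X → X)
    (hconn : Nat.card (Quot (Relation.EqvGen
      (fun x y : {x : X // x ≠ 0} => f (x : X) ≠ 0 ∧ (y : X) = f (x : X)))) = 1) :
    Xor' (∀ x : X, ∃ n : ℕ, f^[n] x = 0) (∀ x : X, x ≠ 0 → f x ≠ 0) := by
  have hreach := apply_eq_apply_of_card_quot_eqvGen_eq_one hconn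
    (fun x => ∃ n, f^[n] (x : X) = 0) fun x y ⟨_, hy⟩ => by
      simpa only [hy, eq_iff_iff] using exists_iterate_eq_iff_exists_iterate_apply_eq f x.2
  by_cases hdead : ∃ x₀ : X, x₀ ≠ 0 ∧ f x₀ = 0
  · obtain ⟨x₀, hx₀, hfx₀⟩ := hdead
    refine Or.inl ⟨fun x => ?_, fun hwheel => hwheel x₀ hx₀ hfx₀⟩
    by_cases hx : x = 0
    · exact ⟨0, hx⟩
    · exact (hreach ⟨x, hx⟩ ⟨x₀, hx₀⟩).mpr ⟨1, hfx₀⟩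
  · push Not at hdead
    obtain ⟨x⟩ := nonempty_of_card_quot_eq_one hconn
    refine Or.inr ⟨hdead, fun hnil => ?_⟩
    obtain ⟨n, hn⟩ := hnil x
    exact Set.MapsTo.iterate hdead n x.2 hn

/-- **Proposition (classification of indecomposable `⟨t⟩`-modules: trees and wheels).**
Let `X` be a finite pointed type with structure map `f` fixing the basepoint, and
suppose the graph `Γ` of `(X, 0, f)` is connected.  Then exactly one of the
following holds: either `f` is nilpotent (`Γ` is a rooted tree), or `f x ≠ 0` for
every nonzero `x` (`Γ` is a wheel).  In particular every indecomposable finite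
`⟨t⟩`-module is either a rooted tree or a wheel. -/
theorem indecomposable_tree_or_wheel {X : Type*} [Finite X] [Zero X]
    (f : X → X) (hf : f 0 = 0)
    (hconn : Nat.card (Quot (Relation.EqvGen
      (fun x y : {x : X // x ≠ 0} => f (x : X) ≠ 0 ∧ (y : X) = f (x : X)))) = 1) :
    Xor' (∀ x : X, ∃ n : ℕ, f^[n] x = 0) (∀ x : X, x ≠ 0 → f x ≠ 0) :=
  indecomposable_tree_or_wheel_general f hconn
end

section
/- Let k be a commutative semiring, and let (X, 0, f) and (Y, 0, g) be pointed modules with smash structure map h on X × Y. Define adjacency matrices A : Matrix {x : X // x ≠ 0} {x : X // x ≠ 0} k by A x x' = 1 if f x' = x and 0 otherwise, B analogously for g, and C : Matrix ({x // x ≠ 0} × {y // y ≠ 0}) ({x // x ≠ 0} × {y // y ≠ 0}) k by C (x, y) (x', y') = 1 if h (x', y') = (x, y) and 0 otherwise. Then C equals the Kronecker product of A and B: for all indices, C (x, y) (x', y') = A x x' * B y y'. (Adj(Γ_{M ∧ N}) = Adj(Γ_M) ⊗ Adj(Γ_N), i.e. Γ_{M ∧ N} is the tensor product graph Γ_M ⊗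 Γ_N.) -/
/-!
Off the basepoint the smash structure map is `f × g`, and a pair can only be sent to a pair of
nonzero elements if neither component is sent to `0`. Hence for nonzero `x, y` we have
`h (x', y') = (x, y) ↔ f x' = x ∧ g y' = y`, and the indicator of a conjunction is the product
of the indicators.
-/

section Smash

variable {X Y : Type*} [Zero X] [Zero Y] [DecidableEq X] [DecidableEq Y]

def smashMap (f : X → X) (g : Y → Y) (p : X × Y) : X × Y :=
  if f p.1 ≠ 0 ∧ g p.2 ≠ 0 then (f p.1, g p.2) else (0, 0)

theorem smashMap_eq_iff (f : X → X) (g : Y → Y) {p : X × Y} {x : X} {y : Y}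
    (hx : x ≠ 0) (hy : y ≠ 0) : smashMap f g p = (x, y) ↔ f p.1 = x ∧ g p.2 = y := by
  unfold smashMap
  split_ifs with hne
  · exact Prod.ext_iff
  · refine ⟨fun h0 => absurd (congrArg Prod.fst h0).symm hx, fun ⟨hfx, hgy⟩ => ?_⟩
    exact absurd ⟨hfx ▸ hx, hgy ▸ hy⟩ hne

end Smash

theorem smash_adjacency_kronecker_general {k X Y : Type*} [CommSemiring k]
    [Zero X] [Zero Y] [DecidableEq X] [DecidableEq Y]
    (f : X → X) (g : Y → Y)
    (h : X × Y → X × Y)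
    (hh : ∀ p : X × Y,
      h p = if f p.1 ≠ 0 ∧ g p.2 ≠ 0 then (f p.1, g p.2) else (0, 0))
    (A : Matrix {x : X // x ≠ 0} {x : X // x ≠ 0} k)
    (hA : ∀ x x' : {x : X // x ≠ 0}, A x x' = if f (x' : X) = (x : X) then 1 else 0)
    (B : Matrix {y : Y // y ≠ 0} {y : Y // y ≠ 0} k)
    (hB : ∀ y y' : {y : Y // y ≠ 0}, B y y' = if g (y' : Y) = (y : Y) then 1 else 0)
    (C : Matrix ({x : X // x ≠ 0} × {y : Y // y ≠ 0})
          ({x : X // x ≠ 0} × {y : Y // y ≠ 0}) k)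
    (hC : ∀ p q : {x : X // x ≠ 0} × {y : Y // y ≠ 0},
      C p q = if h ((q.1 : X), (q.2 : Y)) = ((p.1 : X), (p.2 : Y)) then 1 else 0) :
    C = Matrix.kroneckerMap (· * ·) A B := by
  obtain rfl : h = smashMap f g := funext hh
  ext ⟨x, y⟩ ⟨x', y'⟩
  rw [hC, Matrix.kroneckerMap_apply, hA, hB, ite_zero_mul_ite_zero, one_mul]
  exact if_congr (smashMap_eq_iff f g x.2 y.2) rfl rfl

/-- **Proposition (`Γ_{M ∧ N}` is the tensor product graph `Γ_M ⊗ Γ_N`).**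
Let `(X, 0, f)` and `(Y, 0, g)` be pointed modules with smash structure map `h`
on `X × Y`, and let `A`, `B`, `C` be the adjacency matrices (over a commutative
semiring `k`) of the graphs of `(X, 0, f)`, `(Y, 0, g)` and of the smash product,
indexed by nonzero elements.  Then `C` is the Kronecker product of `A` and `B`:
`Adj(Γ_{M ∧ N}) = Adj(Γ_M) ⊗ Adj(Γ_N)`. -/
theorem smash_adjacency_kronecker {k X Y : Type*} [CommSemiring k]
    [Zero X] [Zero Y] [DecidableEq X] [DecidableEq Y]
    (f : X → X) (g : Y → Y) (hf : f 0 = 0) (hg : g 0 = 0)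
    (h : X × Y → X × Y)
    (hh : ∀ p : X × Y,
      h p = if f p.1 ≠ 0 ∧ g p.2 ≠ 0 then (f p.1, g p.2) else (0, 0))
    (A : Matrix {x : X // x ≠ 0} {x : X // x ≠ 0} k)
    (hA : ∀ x x' : {x : X // x ≠ 0}, A x x' = if f (x' : X) = (x : X) then 1 else 0)
    (B : Matrix {y : Y // y ≠ 0} {y : Y // y ≠ 0} k)
    (hB : ∀ y y' : {y : Y // y ≠ 0}, B y y' = if g (y' : Y) = (y : Y) then 1 else 0)
    (C : Matrix ({x : X // x ≠ 0} × {y : Y // y ≠ 0})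
          ({x : X // x ≠ 0} × {y : Y // y ≠ 0}) k)
    (hC : ∀ p q : {x : X // x ≠ 0} × {y : Y // y ≠ 0},
      C p q = if h ((q.1 : X), (q.2 : Y)) = ((p.1 : X), (p.2 : Y)) then 1 else 0) :
    C = Matrix.kroneckerMap (· * ·) A B :=
  smash_adjacency_kronecker_general f g h hh A hA B hB C hC
end

section
/- Let A be a monoid with zero, let k be a commutative ring, and let M and N be types with zero carrying MulActionWithZero A actions (a • 0 = 0, 0 • m = 0, 1 • m = m, (a*b) • m = a • (b • m)). For a ∈ A, let T^M_a be the k-linear endomorphism of the free module {m : M // m ≠ 0} →₀ k sending the basis vector at m to the basis vector at a • m if a • m ≠ 0 and to 0 otherwise; define T^N_a likewise, and let T^{M∧N}_a be the k-linear endomorphism of ({m : M // m ≠ 0} × {n : N // n ≠ 0}) →₀ k sending the basis vector at (m, n) to the basis vector at (a • m, a • n) if both a • m ≠ 0 and a • n ≠ 0, and to 0 otherwise. Then under the canonical k-linear equivalence (({m // m ≠ 0} →₀ k) ⊗[k] ({n // n ≠ 0} →₀ k)) ≃ (({m // m ≠ 0} × {n // n ≠ 0}) →₀ k) (finsuppTensorFinsupp'),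 the map T^M_a ⊗ T^N_a corresponds to T^{M∧N}_a. (The base-change functor − ⊗_{F₁} k is monoidal: (M ∧ N) ⊗_{F₁} k ≅ (M ⊗_{F₁} k) ⊗_k (N ⊗_{F₁} k) as k[A]-modules.) -/
/-!
A linear map out of `(ι →₀ k) ⊗ (κ →₀ k)` is determined by its values on the pure tensors of
basis vectors `single m 1 ⊗ₜ single n 1`. On such a tensor both sides give the basis vector at
`(a • m, a • n)` when both coordinates stay nonzero, and `0` otherwise: a zero coordinate on
either factor kills the tensor, exactly as it collapses the pair to the basepoint of `M ∧ N`.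
-/

open TensorProduct

theorem finsuppTensorFinsupp'_dite_single_tmul_dite_single {R ι κ : Type*} [CommSemiring R]
    {p q : Prop} [Decidable p] [Decidable q] (i : p → ι) (j : q → κ) :
    finsuppTensorFinsupp' R ι κ
        ((if hp : p then Finsupp.single (i hp) 1 else 0) ⊗ₜ
          (if hq : q then Finsupp.single (j hq) 1 else 0)) =
      if h : p ∧ q then Finsupp.single (i h.1, j h.2) 1 else 0 := by
  by_cases hp : p <;> by_cases hq : q <;> simp [hp, hq]

theorem comp_finsuppTensorFinsupp'_eq_of_apply_single {R ι κ ι' κ' : Type*} [CommSemiring R]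
    (f : (ι →₀ R) →ₗ[R] (ι' →₀ R)) (g : (κ →₀ R) →ₗ[R] (κ' →₀ R))
    (h : (ι × κ →₀ R) →ₗ[R] (ι' × κ' →₀ R))
    (hh : ∀ i j, h (Finsupp.single (i, j) 1) =
      finsuppTensorFinsupp' R ι' κ' (f (Finsupp.single i 1) ⊗ₜ g (Finsupp.single j 1))) :
    h ∘ₗ (finsuppTensorFinsupp' R ι κ).toLinearMap =
      (finsuppTensorFinsupp' R ι' κ').toLinearMap ∘ₗ TensorProduct.map f g := by
  ext i j
  simp [hh]

/-- **Proposition (the base-change functor `− ⊗_{F₁} k` is monoidal).**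
Let `A` be a monoid with zero, `k` a commutative ring, and `M`, `N` pointed
`A`-modules (types with zero and a `MulActionWithZero A` action).  For `a ∈ A`,
let `TM`, `TN`, `TMN` be the `k`-linear structure maps induced by `a` on the free
`k`-modules on the nonzero elements of `M`, `N` and of the smash product `M ∧ N`
respectively.  Then under the canonical equivalence `finsuppTensorFinsupp'`, the
map `TM ⊗ TN` corresponds to `TMN`:
`(M ∧ N) ⊗_{F₁} k ≅ (M ⊗_{F₁} k) ⊗_k (N ⊗_{F₁} k)` as `k[A]`-modules. -/
theorem base_change_monoidal {A M N k : Type*} [MonoidWithZero A] [CommRing k]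
    [Zero M] [MulActionWithZero A M] [Zero N] [MulActionWithZero A N]
    [DecidableEq M] [DecidableEq N] (a : A)
    (TM : ({m : M // m ≠ 0} →₀ k) →ₗ[k] ({m : M // m ≠ 0} →₀ k))
    (hTM : ∀ m : {m : M // m ≠ 0}, TM (Finsupp.single m 1) =
      if h : a • (m : M) ≠ 0 then Finsupp.single ⟨a • (m : M), h⟩ 1 else 0)
    (TN : ({n : N // n ≠ 0} →₀ k) →ₗ[k] ({n : N // n ≠ 0} →₀ k))
    (hTN : ∀ n : {n : N // n ≠ 0}, TN (Finsupp.single n 1) =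
      if h : a • (n : N) ≠ 0 then Finsupp.single ⟨a • (n : N), h⟩ 1 else 0)
    (TMN : (({m : M // m ≠ 0} × {n : N // n ≠ 0}) →₀ k) →ₗ[k]
      (({m : M // m ≠ 0} × {n : N // n ≠ 0}) →₀ k))
    (hTMN : ∀ p : {m : M // m ≠ 0} × {n : N // n ≠ 0},
      TMN (Finsupp.single p 1) =
        if h : a • (p.1 : M) ≠ 0 ∧ a • (p.2 : N) ≠ 0
        then Finsupp.single (⟨a • (p.1 : M), h.1⟩, ⟨a • (p.2 : N), h.2⟩) 1
        else 0) :
    TMN.comp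
        (finsuppTensorFinsupp' k {m : M // m ≠ 0} {n : N // n ≠ 0}).toLinearMap =
      (finsuppTensorFinsupp' k {m : M // m ≠ 0} {n : N // n ≠ 0}).toLinearMap.comp
        (TensorProduct.map TM TN) := by
  refine comp_finsuppTensorFinsupp'_eq_of_apply_single TM TN TMN fun m n => ?_
  rw [hTMN, hTM, hTN, finsuppTensorFinsupp'_dite_single_tmul_dite_single]
end

section
/- Let X and Y be finite types with basepoints 0 and maps f : X → X, g : Y → Y fixing the basepoints, both nilpotent, each having at least one nonzero element, and let h be the smash structure map on X × Y. Then the height of the smash product equals the minimum of the heights: the maximum over nonzero pairs (x, y) (x ≠ 0, y ≠ 0) of sInf {n : ℕ | h^[n] (x, y) = (0, 0)} equals min (max over nonzero x of sInf {n | f^[n] x = 0}) (max over nonzero y of sInf {n | g^[n] y = 0}). In particular every component of Γ_{M ∧ N} has height ≤ min(height Γ_M, height Γ_N), and this bound is attained. -/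
/-!
Along an orbit of the smash map both coordinates move by `f` and `g` until the first moment one
of them would become `0`, at which point the pair collapses to the basepoint. So a nonzero pair
`(x, y)` dies exactly at the minimum of the death times of `x` and `y`, and taking the maximum
over pairs, a maximum of minima over a product splits as the minimum of the two maxima.
-/

section Smash

variable {X Y : Type*} [Zero X] [Zero Y] [DecidableEq X] [DecidableEq Y]

theorem smashMap_iterate_of_forall_ne_zero (f : X → X) (g : Y → Y) {x : X} {y : Y} {k : ℕ}
    (hk : ∀ i ≤ k, f^[i] x ≠ 0 ∧ g^[i] y ≠ 0) :
    (smashMap f g)^[k] (x, y) = (f^[k] x, g^[k] y) := by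
  induction k with
  | zero => rfl
  | succ k ih =>
    have hnext := hk (k + 1) le_rfl
    rw [Function.iterate_succ_apply' f, Function.iterate_succ_apply' g] at hnext ⊢
    rw [Function.iterate_succ_apply', ih fun i hi => hk i (by omega), smashMap, if_pos hnext]

theorem sInf_smashMap_iterate_eq_zero (f : X → X) (g : Y → Y) {x : X} {y : Y}
    (hx : x ≠ 0) (hy : y ≠ 0) (hfx : ∃ n, f^[n] x = 0) (hgy : ∃ n, g^[n] y = 0) :
    sInf {n : ℕ | (smashMap f g)^[n] (x, y) = (0, 0)} =
      min (sInf {n : ℕ | f^[n] x = 0}) (sInf {n : ℕ | g^[n] y = 0}) := by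
  set a := sInf {n : ℕ | f^[n] x = 0}
  set b := sInf {n : ℕ | g^[n] y = 0}
  have hfa : f^[a] x = 0 := Nat.sInf_mem hfx
  have hgb : g^[b] y = 0 := Nat.sInf_mem hgy
  have alive : ∀ i < min a b, f^[i] x ≠ 0 ∧ g^[i] y ≠ 0 := fun i hi =>
    ⟨Nat.notMem_of_lt_sInf (lt_min_iff.mp hi).1, Nat.notMem_of_lt_sInf (lt_min_iff.mp hi).2⟩
  obtain ⟨k, hk⟩ : ∃ k, min a b = k + 1 :=
    Nat.exists_eq_add_one.mpr (lt_min (Nat.pos_of_ne_zero fun ha => hx (by rwa [ha] at hfa))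
      (Nat.pos_of_ne_zero fun hb => hy (by rwa [hb] at hgb)))
  refine IsLeast.csInf_eq ⟨?_, fun n hn => not_lt.mp fun hlt => ?_⟩
  · have dies : ¬(f^[k + 1] x ≠ 0 ∧ g^[k + 1] y ≠ 0) := by
      rcases min_choice a b with hab | hab <;> rw [hab] at hk <;> simp [← hk, hfa, hgb]
    rw [Set.mem_ofPred_eq, hk, Function.iterate_succ_apply',
      smashMap_iterate_of_forall_ne_zero f g fun i hi => alive i (by omega), smashMap,
      if_neg (by rwa [Function.iterate_succ_apply', Function.iterate_succ_apply'] at dies)]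
  · rw [Set.mem_ofPred_eq, smashMap_iterate_of_forall_ne_zero f g fun i hi => alive i (by omega),
      Prod.mk.injEq] at hn
    exact (alive n hlt).1 hn.1

end Smash

theorem ciSup_prod_min {α ι κ : Type*} [ConditionallyCompleteLinearOrderBot α] [Finite ι]
    [Finite κ] (a : ι → α) (b : κ → α) :
    ⨆ p : ι × κ, min (a p.1) (b p.2) = min (⨆ i, a i) (⨆ j, b j) := by
  cases isEmpty_or_nonempty ι
  · simp [ciSup_of_empty]
  cases isEmpty_or_nonempty κ
  · simp [ciSup_of_empty]
  refine le_antisymm (ciSup_le fun p => min_le_min (le_ciSup (Finite.bddAbove_range a) p.1)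
    (le_ciSup (Finite.bddAbove_range b) p.2)) ?_
  obtain ⟨i, hi⟩ := exists_eq_ciSup_of_finite (f := a)
  obtain ⟨j, hj⟩ := exists_eq_ciSup_of_finite (f := b)
  rw [← hi, ← hj]
  exact le_ciSup (Finite.bddAbove_range (fun p : ι × κ => min (a p.1) (b p.2))) (i, j)

theorem smash_height_min_general {X Y : Type*} [Fintype X] [Fintype Y]
    [Zero X] [Zero Y] [DecidableEq X] [DecidableEq Y]
    (f : X → X) (g : Y → Y)
    (hfnil : ∀ x : X, ∃ n : ℕ, f^[n] x = 0)
    (hgnil : ∀ y : Y, ∃ n : ℕ, g^[n] y = 0)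
    (h : X × Y → X × Y)
    (hh : ∀ p : X × Y,
      h p = if f p.1 ≠ 0 ∧ g p.2 ≠ 0 then (f p.1, g p.2) else (0, 0)) :
    (⨆ p : {p : X × Y // p.1 ≠ 0 ∧ p.2 ≠ 0},
        sInf {n : ℕ | h^[n] (p : X × Y) = (0, 0)}) =
      min (⨆ x : {x : X // x ≠ 0}, sInf {n : ℕ | f^[n] (x : X) = 0})
        (⨆ y : {y : Y // y ≠ 0}, sInf {n : ℕ | g^[n] (y : Y) = 0}) := by
  obtain rfl : h = smashMap f g := funext hh
  rw [← ciSup_prod_min, ← Equiv.subtypeProdEquivProd.iSup_comp]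
  exact iSup_congr fun p =>
    sInf_smashMap_iterate_eq_zero f g p.2.1 p.2.2 (hfnil _) (hgnil _)

/-- **Proposition (height of the smash product of two nilpotent modules).**
Let `(X, 0, f)` and `(Y, 0, g)` be finite pointed modules with `f`, `g` nilpotent,
each with at least one nonzero element, and let `h` be the smash structure map on
`X × Y`.  Then the height of the smash product equals the minimum of the heights:
the maximum over nonzero pairs `(x, y)` of the least `n` with `h^[n] (x, y) = (0,0)`
equals the minimum of the maximum over nonzero `x` of the least `n` with
`f^[n] x = 0` and the analogous quantity for `g`.  In particular every component
of `Γ_{M ∧ N}` has height `≤ min (height Γ_M, height Γ_N)`, with equality attained. -/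
theorem smash_height_min {X Y : Type*} [Fintype X] [Fintype Y]
    [Zero X] [Zero Y] [DecidableEq X] [DecidableEq Y]
    (f : X → X) (g : Y → Y) (hf : f 0 = 0) (hg : g 0 = 0)
    (hfnil : ∀ x : X, ∃ n : ℕ, f^[n] x = 0)
    (hgnil : ∀ y : Y, ∃ n : ℕ, g^[n] y = 0)
    (hXne : ∃ x : X, x ≠ 0) (hYne : ∃ y : Y, y ≠ 0)
    (h : X × Y → X × Y)
    (hh : ∀ p : X × Y,
      h p = if f p.1 ≠ 0 ∧ g p.2 ≠ 0 then (f p.1, g p.2) else (0, 0)) :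
    (⨆ p : {p : X × Y // p.1 ≠ 0 ∧ p.2 ≠ 0},
        sInf {n : ℕ | h^[n] (p : X × Y) = (0, 0)}) =
      min (⨆ x : {x : X // x ≠ 0}, sInf {n : ℕ | f^[n] (x : X) = 0})
        (⨆ y : {y : Y // y ≠ 0}, sInf {n : ℕ | g^[n] (y : Y) = 0}) :=
  smash_height_min_general f g hfnil hgnil h hh
end
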